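/- arXiv:1704.05199 — 3 statements merged into one kernel-verified Lean document; each statement's English description precedes it below -/
import Mathlib

section
/- Let X be an integrable random variable and f : ℝ → ℝ a convex differentiable function with f(X) integrable. Then E[X] minimizes u ↦ E[d_f(X,u)] over ℝ, where d_f is the Bregman divergence of f; that is, for all u, E[d_f(X, E[X])] ≤ E[d_f(X, u)]. -/
open MeasureTheory

noncomputable def bregmanDiv (f : ℝ → ℝ) (x y : ℝ) : ℝ :=
  f x - f y - deriv f y * (x - y)

theorem ConvexOn.add_mul_sub_le_of_hasDerivAt {S : Set ℝ} {f : ℝ → ℝ} {x y f' : ℝ}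
    (hfc : ConvexOn ℝ S f) (hx : x ∈ S) (hy : y ∈ S) (hf : HasDerivAt f f' x) :
    f x + f' * (y - x) ≤ f y := by
  rcases lt_trichotomy x y with hxy | rfl | hyx
  · have hslope := hfc.le_slope_of_hasDerivAt hx hy hxy hf
    rw [slope_def_field, le_div_iff₀ (sub_pos.2 hxy)] at hslope
    linarith
  · simp
  · have hslope := hfc.slope_le_of_hasDerivAt hy hx hyx hf
    rw [slope_def_field, div_le_iff₀ (sub_pos.2 hyx)] at hslope
    linarith

theorem bregmanDiv_nonneg {f : ℝ → ℝ} (hfc : ConvexOn ℝ Set.univ f) (hf : Differentiable ℝ f)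
    (x y : ℝ) : 0 ≤ bregmanDiv f x y := by
  have := hfc.add_mul_sub_le_of_hasDerivAt (Set.mem_univ y) (Set.mem_univ x) (hf y).hasDerivAt
  rw [bregmanDiv]
  linarith

section Expectation

variable {Ω : Type*} [MeasurableSpace Ω] {μ : Measure Ω} [IsProbabilityMeasure μ]
  {X : Ω → ℝ} {f : ℝ → ℝ}

theorem integral_bregmanDiv (hX : Integrable X μ) (hfX : Integrable (fun ω => f (X ω)) μ)
    (u : ℝ) :
    ∫ ω, bregmanDiv f (X ω) u ∂μ = ∫ ω, f (X ω) ∂μ - f u - deriv f u * (∫ ω, X ω ∂μ - u) := by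
  have hfX_sub : Integrable (fun ω => f (X ω) - f u) μ := hfX.sub (integrable_const _)
  have hX_sub : Integrable (fun ω => deriv f u * (X ω - u)) μ :=
    (hX.sub (integrable_const _)).const_mul _
  unfold bregmanDiv
  rw [integral_sub hfX_sub hX_sub,
    integral_sub hfX (integrable_const _), integral_const_mul,
    integral_sub hX (integrable_const _), integral_const, integral_const]
  simp

/-- Bregman analogue of the bias–variance decomposition. -/
theorem integral_bregmanDiv_eq_add (hX : Integrable X μ)
    (hfX : Integrable (fun ω => f (X ω)) μ) (u : ℝ) :
    ∫ ω, bregmanDiv f (X ω) u ∂μ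
      = ∫ ω, bregmanDiv f (X ω) (∫ ω', X ω' ∂μ) ∂μ + bregmanDiv f (∫ ω', X ω' ∂μ) u := by
  rw [integral_bregmanDiv hX hfX, integral_bregmanDiv hX hfX, bregmanDiv]
  ring

end Expectation

/-- `E[X]` minimizes `u ↦ E[d_f(X,u)]` for the Bregman divergence of a convex
differentiable `f`. -/
theorem stmt_3 {Ω : Type*} [MeasurableSpace Ω] (μ : Measure Ω) [IsProbabilityMeasure μ]
    (X : Ω → ℝ) (hX : Integrable X μ)
    (f : ℝ → ℝ) (hconv : ConvexOn ℝ Set.univ f) (hdiff : Differentiable ℝ f)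
    (hfX : Integrable (fun ω => f (X ω)) μ) :
    ∀ u : ℝ,
      ∫ ω, (f (X ω) - f (∫ ω', X ω' ∂μ)
          - deriv f (∫ ω', X ω' ∂μ) * (X ω - ∫ ω', X ω' ∂μ)) ∂μ
        ≤ ∫ ω, (f (X ω) - f u - deriv f u * (X ω - u)) ∂μ := fun u => by
  change ∫ ω, bregmanDiv f (X ω) (∫ ω', X ω' ∂μ) ∂μ ≤ ∫ ω, bregmanDiv f (X ω) u ∂μ
  rw [integral_bregmanDiv_eq_add hX hfX u]
  exact le_add_of_nonneg_right (bregmanDiv_nonneg hconv hdiff _ _)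
end

section
/- If f : ℝ → ℝ is strictly convex and differentiable, X is an integrable random variable with f(X) integrable, and u* minimizes u ↦ E[d_f(X,u)], then u* = E[X]. -/
open MeasureTheory

/-
The expected divergence `E[d_f(X,u)] = E[f(X)] - f(u) - f'(u)(E[X] - u)` depends on `X` only
through `E[f(X)]` and `E[X]`. At `u = E[X]` it equals `E[f(X)] - f(E[X])`; at any other `u` it is
strictly larger, because the tangent line of `f` at `u` lies strictly below `f` at `E[X]`.
-/

lemma StrictConvexOn.add_deriv_mul_sub_lt {S : Set ℝ} {f : ℝ → ℝ} (hf : StrictConvexOn ℝ S f)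
    {x y : ℝ} (hx : x ∈ S) (hy : y ∈ S) (hxy : x ≠ y) (hfx : DifferentiableAt ℝ f x) :
    f x + deriv f x * (y - x) < f y := by
  rcases hxy.lt_or_gt with hlt | hgt
  · have hslope := hf.deriv_lt_slope hx hy hlt hfx
    rw [slope_def_field, lt_div_iff₀ (sub_pos.mpr hlt)] at hslope
    linarith
  · have hslope := hf.slope_lt_deriv hy hx hgt hfx
    rw [slope_def_field, div_lt_iff₀ (sub_pos.mpr hgt)] at hslope
    linarith

lemma integral_bregman_eq {Ω : Type*} [MeasurableSpace Ω] {μ : Measure Ω}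
    [IsProbabilityMeasure μ] {X : Ω → ℝ} {f : ℝ → ℝ} (hX : Integrable X μ)
    (hfX : Integrable (fun ω => f (X ω)) μ) (u : ℝ) :
    ∫ ω, (f (X ω) - f u - deriv f u * (X ω - u)) ∂μ
      = ∫ ω, f (X ω) ∂μ - f u - deriv f u * (∫ ω, X ω ∂μ - u) := by
  have hfX_sub : Integrable (fun ω => f (X ω) - f u) μ := hfX.sub (integrable_const _)
  have hlinear : Integrable (fun ω => deriv f u * (X ω - u)) μ :=
    (hX.sub (integrable_const _)).const_mul _
  rw [integral_sub hfX_sub hlinear, integral_sub hfX (integrable_const _), integral_const_mul,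
    integral_sub hX (integrable_const _)]
  simp

/-- For strictly convex differentiable `f`, any minimizer of `u ↦ E[d_f(X,u)]`
equals `E[X]`. -/
theorem stmt_4 {Ω : Type*} [MeasurableSpace Ω] (μ : Measure Ω) [IsProbabilityMeasure μ]
    (X : Ω → ℝ) (hX : Integrable X μ)
    (f : ℝ → ℝ) (hconv : StrictConvexOn ℝ Set.univ f) (hdiff : Differentiable ℝ f)
    (hfX : Integrable (fun ω => f (X ω)) μ) (ustar : ℝ)
    (hmin : ∀ u : ℝ,
      ∫ ω, (f (X ω) - f ustar - deriv f ustar * (X ω - ustar)) ∂μ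
        ≤ ∫ ω, (f (X ω) - f u - deriv f u * (X ω - u)) ∂μ) :
    ustar = ∫ ω, X ω ∂μ := by
  by_contra hne
  have hle := hmin (∫ ω, X ω ∂μ)
  rw [integral_bregman_eq hX hfX, integral_bregman_eq hX hfX, sub_self, mul_zero,
    sub_zero] at hle
  have htangent := hconv.add_deriv_mul_sub_lt (Set.mem_univ ustar) (Set.mem_univ _) hne
    (hdiff ustar)
  linarith
end

section
/- Let X be a positive integrable random variable with X·log X integrable, G a sub-σ-algebra, and X̂ = E[X|G]. Then for any positive G-measurable integrable Z with E[X·|log Z|] < ∞, E[ℓ_P(X, Z)] = E[ℓ_P(X, X̂)] + E[ℓ_P(X̂, Z)], where ℓ_P(x,y) = x·log(x/y) - x + y. In particular E[ℓ_P(X, X̂)] ≤ E[ℓ_P(X, Z)]. -/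
/-!
Write `Y = E[X|G]`. Pointwise, the Poisson loss (the Bregman divergence of `x ↦ x log x`)
satisfies the three-point identity
`ℓ(X, Z) = ℓ(X, Y) + ℓ(Y, Z) + (X - Y) (log Y - log Z)`,
and the last term has expectation zero because `log Y - log Z` is `G`-measurable. The work lies
in integrability: conditional Jensen bounds `Y log Y` by `E[X log X | G]`, and for a
`G`-measurable `g`, `X g` is integrable iff `Y g` is, since `∫⁻ |g| X = ∫⁻ |g| Y`.
-/

open MeasureTheory Real InformationTheory
open scoped ENNReal

noncomputable def poissonLoss (x y : ℝ) : ℝ := x * log (x / y) - x + y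

lemma poissonLoss_eq_mul_klFun (x : ℝ) {y : ℝ} (hy : y ≠ 0) :
    poissonLoss x y = y * klFun (x / y) := by
  unfold poissonLoss klFun
  field_simp
  ring

lemma poissonLoss_nonneg {x y : ℝ} (hx : 0 ≤ x) (hy : 0 < y) : 0 ≤ poissonLoss x y := by
  rw [poissonLoss_eq_mul_klFun x hy.ne']
  exact mul_nonneg hy.le (klFun_nonneg (div_nonneg hx hy.le))

lemma poissonLoss_eq_sub_mul_log {x y : ℝ} (hx : 0 < x) (hy : 0 < y) :
    poissonLoss x y = x * log x - x * log y - x + y := by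
  rw [poissonLoss, log_div hx.ne' hy.ne']
  ring

lemma poissonLoss_three_point {x y z : ℝ} (hx : 0 < x) (hy : 0 < y) (hz : 0 < z) :
    poissonLoss x z = poissonLoss x y + poissonLoss y z + (x - y) * (log y - log z) := by
  rw [poissonLoss_eq_sub_mul_log hx hz, poissonLoss_eq_sub_mul_log hx hy,
    poissonLoss_eq_sub_mul_log hy hz]
  ring

section ConditionalExpectation

variable {Ω : Type*} {m m0 : MeasurableSpace Ω} {μ : Measure Ω} {X : Ω → ℝ}

lemma integrable_poissonLoss {f g : Ω → ℝ} (hf₀ : ∀ᵐ ω ∂μ, 0 < f ω) (hg₀ : ∀ᵐ ω ∂μ, 0 < g ω)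
    (hf : Integrable f μ) (hg : Integrable g μ)
    (hff : Integrable (fun ω => f ω * log (f ω)) μ)
    (hfg : Integrable (fun ω => f ω * log (g ω)) μ) :
    Integrable (fun ω => poissonLoss (f ω) (g ω)) μ := by
  refine (((hff.sub hfg).sub hf).add hg).congr ?_
  filter_upwards [hf₀, hg₀] with ω hfω hgω
  exact (poissonLoss_eq_sub_mul_log hfω hgω).symm

lemma condExp_pos (hm : m ≤ m0) [SigmaFinite (μ.trim hm)] (hX : Integrable X μ)
    (hX₀ : ∀ᵐ ω ∂μ, 0 < X ω) : ∀ᵐ ω ∂μ, 0 < μ[X|m] ω := by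
  set s := {ω | μ[X|m] ω ≤ 0}
  have hs : MeasurableSet[m] s :=
    measurableSet_le stronglyMeasurable_condExp.measurable measurable_const
  have hX₀s : 0 ≤ᵐ[μ.restrict s] X := ae_restrict_of_ae (hX₀.mono fun _ h => h.le)
  have hXs : ∫ ω in s, X ω ∂μ = 0 := by
    refine le_antisymm ?_ (integral_nonneg_of_ae hX₀s)
    rw [← setIntegral_condExp hm hX hs]
    exact setIntegral_nonpos (hm s hs) fun _ h => h
  have hXs_zero := (setIntegral_eq_zero_iff_of_nonneg_ae hX₀s hX.integrableOn).1 hXs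
  have hs_null : μ s = 0 := by
    rw [← Measure.restrict_eq_zero, ← ae_eq_bot, ← Filter.eventually_false_iff_eq_bot]
    filter_upwards [hXs_zero, ae_restrict_of_ae hX₀] with ω hω hω₀
    exact hω₀.ne' hω
  rw [ae_iff]
  simpa [s, not_lt] using hs_null

lemma lintegral_ofReal_condExp_mul (hm : m ≤ m0) [SigmaFinite (μ.trim hm)]
    (hX : Integrable X μ) (hX₀ : 0 ≤ᵐ[μ] X) {g : Ω → ℝ≥0∞} (hg : Measurable[m] g) :
    ∫⁻ ω, ENNReal.ofReal (μ[X|m] ω) * g ω ∂μ = ∫⁻ ω, ENNReal.ofReal (X ω) * g ω ∂μ := by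
  have hY₀ : 0 ≤ᵐ[μ] μ[X|m] := condExp_nonneg hX₀
  have htrim : (μ.withDensity fun ω => ENNReal.ofReal (μ[X|m] ω)).trim hm
      = (μ.withDensity fun ω => ENNReal.ofReal (X ω)).trim hm := by
    refine @Measure.ext _ m _ _ fun s hs => ?_
    rw [trim_measurableSet_eq hm hs, trim_measurableSet_eq hm hs, withDensity_apply _ (hm s hs),
      withDensity_apply _ (hm s hs),
      ← ofReal_integral_eq_lintegral_ofReal integrable_condExp.restrict (ae_restrict_of_ae hY₀),
      ← ofReal_integral_eq_lintegral_ofReal hX.restrict (ae_restrict_of_ae hX₀),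
      setIntegral_condExp hm hX hs]
  have h_trim {f : Ω → ℝ≥0∞} (hf : AEMeasurable f μ) :
      ∫⁻ ω, f ω * g ω ∂μ = ∫⁻ ω, g ω ∂(μ.withDensity f).trim hm := by
    rw [lintegral_trim hm hg,
      lintegral_withDensity_eq_lintegral_mul₀ hf (hg.mono hm le_rfl).aemeasurable]
    rfl
  rw [h_trim (by fun_prop), h_trim hX.aemeasurable.ennreal_ofReal, htrim]

lemma integrable_condExp_mul_iff (hm : m ≤ m0) [SigmaFinite (μ.trim hm)]
    (hX : Integrable X μ) (hX₀ : 0 ≤ᵐ[μ] X) {g : Ω → ℝ} (hg : StronglyMeasurable[m] g) :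
    Integrable (fun ω => μ[X|m] ω * g ω) μ ↔ Integrable (fun ω => X ω * g ω) μ := by
  have h_enorm {f : Ω → ℝ} (hf : 0 ≤ᵐ[μ] f) :
      ∫⁻ ω, ‖f ω * g ω‖ₑ ∂μ = ∫⁻ ω, ENNReal.ofReal (f ω) * ‖g ω‖ₑ ∂μ := by
    refine lintegral_congr_ae ?_
    filter_upwards [hf] with ω hω
    rw [enorm_mul, Real.enorm_eq_ofReal hω]
  have hlint : ∫⁻ ω, ‖μ[X|m] ω * g ω‖ₑ ∂μ = ∫⁻ ω, ‖X ω * g ω‖ₑ ∂μ := by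
    rw [h_enorm (condExp_nonneg hX₀), h_enorm hX₀]
    exact lintegral_ofReal_condExp_mul hm hX hX₀ (measurable_enorm.comp hg.measurable)
  have hYg : AEStronglyMeasurable (fun ω => μ[X|m] ω * g ω) μ :=
    ((stronglyMeasurable_condExp.mul hg).mono hm).aestronglyMeasurable
  have hXg : AEStronglyMeasurable (fun ω => X ω * g ω) μ :=
    hX.aestronglyMeasurable.mul (hg.mono hm).aestronglyMeasurable
  simp only [Integrable, hYg, hXg, true_and, HasFiniteIntegral, hlint]

lemma integral_condExp_mul (hm : m ≤ m0) [SigmaFinite (μ.trim hm)] (hX : Integrable X μ)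
    {g : Ω → ℝ} (hg : StronglyMeasurable[m] g) (hXg : Integrable (fun ω => X ω * g ω) μ) :
    ∫ ω, μ[X|m] ω * g ω ∂μ = ∫ ω, X ω * g ω ∂μ := by
  rw [← integral_condExp hm (f := fun ω => X ω * g ω)]
  exact integral_congr_ae (condExp_mul_of_stronglyMeasurable_right hg hXg hX).symm

lemma integrable_condExp_mul_log_condExp [IsFiniteMeasure μ] (hm : m ≤ m0)
    (hX : Integrable X μ) (hX₀ : 0 ≤ᵐ[μ] X) (hXlogX : Integrable (fun ω => X ω * log (X ω)) μ) :
    Integrable (fun ω => μ[X|m] ω * log (μ[X|m] ω)) μ := by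
  have h_jensen := convexOn_mul_log.map_condExp_le hm
    (continuous_mul_log.lowerSemicontinuous.lowerSemicontinuousOn _) hX₀ isClosed_Ici hX hXlogX
  refine integrable_of_le_of_le (g₁ := fun ω => μ[X|m] ω - 1) ?_ ?_ h_jensen
    (integrable_condExp.sub (integrable_const 1)) integrable_condExp
  · exact (continuous_mul_log.measurable.comp
      (stronglyMeasurable_condExp.mono hm).measurable).aestronglyMeasurable
  · filter_upwards [condExp_nonneg hX₀] with ω hω
    exact self_sub_one_le_mul_log hω

lemma integral_poissonLoss_nonneg {f g : Ω → ℝ} (hf₀ : 0 ≤ᵐ[μ] f) (hg₀ : ∀ᵐ ω ∂μ, 0 < g ω) :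
    0 ≤ ∫ ω, poissonLoss (f ω) (g ω) ∂μ := by
  refine integral_nonneg_of_ae ?_
  filter_upwards [hf₀, hg₀] with ω hfω hgω
  exact poissonLoss_nonneg hfω hgω

lemma integral_poissonLoss_eq_add_condExp [IsFiniteMeasure μ] (hm : m ≤ m0)
    (hX : Integrable X μ) (hX₀ : ∀ᵐ ω ∂μ, 0 < X ω)
    (hXlogX : Integrable (fun ω => X ω * log (X ω)) μ)
    {Z : Ω → ℝ} (hZ : Integrable Z μ) (hZ₀ : ∀ᵐ ω ∂μ, 0 < Z ω) (hZm : StronglyMeasurable[m] Z)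
    (hXlogZ : Integrable (fun ω => X ω * log (Z ω)) μ) :
    ∫ ω, poissonLoss (X ω) (Z ω) ∂μ
      = ∫ ω, poissonLoss (X ω) (μ[X|m] ω) ∂μ + ∫ ω, poissonLoss (μ[X|m] ω) (Z ω) ∂μ := by
  set Y := μ[X|m]
  have hX₀' : 0 ≤ᵐ[μ] X := hX₀.mono fun _ h => h.le
  have hY₀ : ∀ᵐ ω ∂μ, 0 < Y ω := condExp_pos hm hX hX₀
  have hlogY : StronglyMeasurable[m] fun ω => log (Y ω) :=
    stronglyMeasurable_condExp.measurable.log.stronglyMeasurable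
  have hlogZ : StronglyMeasurable[m] fun ω => log (Z ω) := hZm.measurable.log.stronglyMeasurable
  have hW : StronglyMeasurable[m] fun ω => log (Y ω) - log (Z ω) := hlogY.sub hlogZ
  have hYlogY := integrable_condExp_mul_log_condExp hm hX hX₀' hXlogX
  have hXlogY := (integrable_condExp_mul_iff hm hX hX₀' hlogY).1 hYlogY
  have hYlogZ := (integrable_condExp_mul_iff hm hX hX₀' hlogZ).2 hXlogZ
  have hXlog : Integrable (fun ω => X ω * (log (Y ω) - log (Z ω))) μ :=
    (hXlogY.sub hXlogZ).congr (.of_forall fun ω => (mul_sub _ _ _).symm)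
  have hYlog : Integrable (fun ω => Y ω * (log (Y ω) - log (Z ω))) μ :=
    (hYlogY.sub hYlogZ).congr (.of_forall fun ω => (mul_sub _ _ _).symm)
  have hXY := integrable_poissonLoss hX₀ hY₀ hX integrable_condExp hXlogX hXlogY
  have hYZ := integrable_poissonLoss hY₀ hZ₀ integrable_condExp hZ hYlogY hYlogZ
  have hsplit : (fun ω => poissonLoss (X ω) (Z ω)) =ᵐ[μ]
      (fun ω => poissonLoss (X ω) (Y ω)) + (fun ω => poissonLoss (Y ω) (Z ω))
        + ((fun ω => X ω * (log (Y ω) - log (Z ω))) - fun ω => Y ω * (log (Y ω) - log (Z ω))) := by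
    filter_upwards [hX₀, hY₀, hZ₀] with ω hXω hYω hZω
    simp only [Pi.add_apply, Pi.sub_apply, poissonLoss_three_point hXω hYω hZω]
    ring
  rw [integral_congr_ae hsplit, integral_add' (hXY.add hYZ) (hXlog.sub hYlog),
    integral_add' hXY hYZ, integral_sub' hXlog hYlog,
    integral_condExp_mul hm hX hW hXlog, sub_self, add_zero]

end ConditionalExpectation

/-- Orthogonality principle for conditional expectation under the Poisson loss
`ℓ_P(x,y) = x log(x/y) - x + y`. -/
theorem stmt_13 {Ω : Type*} {m0 : MeasurableSpace Ω} (μ : Measure Ω)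
    [IsProbabilityMeasure μ] (G : MeasurableSpace Ω) (hG : G ≤ m0)
    (X : Ω → ℝ) (hXpos : ∀ᵐ ω ∂μ, 0 < X ω) (hX : Integrable X μ)
    (hXlogX : Integrable (fun ω => X ω * Real.log (X ω)) μ)
    (Z : Ω → ℝ) (hZpos : ∀ᵐ ω ∂μ, 0 < Z ω) (hZmeas : StronglyMeasurable[G] Z)
    (hZ : Integrable Z μ)
    (hXlogZ : Integrable (fun ω => X ω * |Real.log (Z ω)|) μ) :
    (∫ ω, (X ω * Real.log (X ω / Z ω) - X ω + Z ω) ∂μ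
        = (∫ ω, (X ω * Real.log (X ω / (μ[X|G]) ω) - X ω + (μ[X|G]) ω) ∂μ)
          + ∫ ω, ((μ[X|G]) ω * Real.log ((μ[X|G]) ω / Z ω) - (μ[X|G]) ω + Z ω) ∂μ)
      ∧ ∫ ω, (X ω * Real.log (X ω / (μ[X|G]) ω) - X ω + (μ[X|G]) ω) ∂μ
          ≤ ∫ ω, (X ω * Real.log (X ω / Z ω) - X ω + Z ω) ∂μ := by
  have hXlogZ' : Integrable (fun ω => X ω * Real.log (Z ω)) μ := by
    refine hXlogZ.mono' (hX.aestronglyMeasurable.mul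
      (hZmeas.mono hG).measurable.log.aestronglyMeasurable) ?_
    filter_upwards [hXpos] with ω hω
    rw [norm_mul, Real.norm_eq_abs, Real.norm_eq_abs, abs_of_pos hω]
  have h_pythagoras :=
    integral_poissonLoss_eq_add_condExp hG hX hXpos hXlogX hZ hZpos hZmeas hXlogZ'
  have h_nonneg := integral_poissonLoss_nonneg (μ := μ) (condExp_nonneg (m := G)
    (hXpos.mono fun _ h => h.le)) hZpos
  exact ⟨h_pythagoras, h_pythagoras ▸ le_add_of_nonneg_right h_nonneg⟩
end
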